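/- Let φ be the standard normal density and Φ the standard normal cdf. Fix λ ∈ (0,1]. Then the equation Φ(z)·(1 − z²) − z·φ(z) = 1/(2(1+λ)) has a unique solution z* in (−∞, 0), and the near-expiry expected relative reward G(z) = (1 − 2Φ(z)(1+λ))·(−φ(z)/z − Φ(z)) attains its maximal value over z ∈ (−∞, 0) at z = z*; equivalently, 𝓔_λ(δ) = (1 − 2δ(1+λ))·R̄_δ is maximized over δ ∈ (0, 1/2) at the unique δ* = Φ(z*) solving δ(1 − z_δ²) − z_δ·φ(z_δ) = 1/(2(1+λ)). -/

import Mathlib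

open MeasureTheory Real

/-- The standard normal density φ(u) = exp(-u²/2)/√(2π). -/
noncomputable def stdNormalPdf (u : ℝ) : ℝ := Real.exp (-u ^ 2 / 2) / Real.sqrt (2 * Real.pi)

/-- The standard normal cdf Φ(z) = ∫_{-∞}^z φ(u) du. -/
noncomputable def stdNormalCdf (z : ℝ) : ℝ := ∫ u in Set.Iic z, stdNormalPdf u

/-! In the variable `z = z_δ` the reward has derivative `φ(z)/z² · (1 - 2(1+λ)F(z))`, where
`F(z) = Φ(z)(1 - z²) - zφ(z)` is the left-hand side of the first-order condition (19).
Since `F' = -2zΦ > 0` on `z < 0`, `F` increases there, from `F(-1) = φ(1) < 1/4` to `F(0) = 1/2`;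
so for `λ ∈ (0,1]` the level `1/(2(1+λ)) ∈ [1/4, 1/2)` is hit exactly once, at `z*`, and the
reward increases up to `z*` and decreases after it. -/

open Set ProbabilityTheory

lemma stdNormalPdf_eq_gaussianPDFReal : stdNormalPdf = gaussianPDFReal 0 1 := by
  ext u
  simp [stdNormalPdf, gaussianPDFReal, div_eq_inv_mul]

lemma stdNormalPdf_pos (u : ℝ) : 0 < stdNormalPdf u := by
  rw [stdNormalPdf_eq_gaussianPDFReal]
  exact gaussianPDFReal_pos 0 1 u one_ne_zero

lemma integrable_stdNormalPdf : Integrable stdNormalPdf := by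
  rw [stdNormalPdf_eq_gaussianPDFReal]
  exact integrable_gaussianPDFReal 0 1

lemma integral_stdNormalPdf : ∫ u, stdNormalPdf u = 1 := by
  rw [stdNormalPdf_eq_gaussianPDFReal]
  exact integral_gaussianPDFReal_eq_one 0 one_ne_zero

lemma stdNormalPdf_neg (u : ℝ) : stdNormalPdf (-u) = stdNormalPdf u := by
  simp [stdNormalPdf]

lemma continuous_stdNormalPdf : Continuous stdNormalPdf := by
  unfold stdNormalPdf
  fun_prop

lemma hasDerivAt_stdNormalPdf (z : ℝ) : HasDerivAt stdNormalPdf (-z * stdNormalPdf z) z := by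
  have h : HasDerivAt (fun u : ℝ => -u ^ 2 / 2) (-z) z := by
    refine (((hasDerivAt_pow 2 z).neg).div_const 2).congr_deriv ?_
    push_cast
    ring
  exact (h.exp.div_const _).congr_deriv (by rw [stdNormalPdf]; ring)

lemma stdNormalPdf_one_lt : stdNormalPdf 1 < 1 / 4 := by
  have hsq : stdNormalPdf 1 ^ 2 = (Real.exp 1 * (2 * Real.pi))⁻¹ := by
    rw [stdNormalPdf, div_pow, ← Real.exp_nat_mul, Real.sq_sqrt (by positivity), mul_inv,
      ← Real.exp_neg]
    norm_num [div_eq_mul_inv]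
  have h16 : (16 : ℝ) < Real.exp 1 * (2 * Real.pi) := by
    nlinarith [Real.exp_one_gt_d9, Real.pi_gt_d2]
  have hlt : stdNormalPdf 1 ^ 2 < (1 / 4) ^ 2 := by
    rw [hsq]
    calc (Real.exp 1 * (2 * Real.pi))⁻¹ < (16 : ℝ)⁻¹ := inv_strictAnti₀ (by norm_num) h16
      _ = (1 / 4) ^ 2 := by norm_num
  exact lt_of_pow_lt_pow_left₀ 2 (by norm_num) hlt

lemma stdNormalCdf_sub_stdNormalCdf (a b : ℝ) :
    stdNormalCdf b - stdNormalCdf a = ∫ u in a..b, stdNormalPdf u := by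
  rw [stdNormalCdf, stdNormalCdf, intervalIntegral.integral_Iic_sub_Iic
    integrable_stdNormalPdf.integrableOn integrable_stdNormalPdf.integrableOn]

lemma hasDerivAt_stdNormalCdf (z : ℝ) : HasDerivAt stdNormalCdf (stdNormalPdf z) z := by
  have hcdf : stdNormalCdf = fun b => stdNormalCdf 0 + ∫ u in (0 : ℝ)..b, stdNormalPdf u := by
    ext b
    rw [← stdNormalCdf_sub_stdNormalCdf]
    ring
  rw [hcdf]
  exact (intervalIntegral.integral_hasDerivAt_right integrable_stdNormalPdf.intervalIntegrable
    (continuous_stdNormalPdf.stronglyMeasurableAtFilter _ _)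
    continuous_stdNormalPdf.continuousAt).const_add _

lemma continuous_stdNormalCdf : Continuous stdNormalCdf :=
  continuous_iff_continuousAt.2 fun z => (hasDerivAt_stdNormalCdf z).continuousAt

lemma stdNormalCdf_pos (z : ℝ) : 0 < stdNormalCdf z := by
  have hslab : 0 < stdNormalCdf z - stdNormalCdf (z - 1) := by
    rw [stdNormalCdf_sub_stdNormalCdf]
    exact intervalIntegral.intervalIntegral_pos_of_pos integrable_stdNormalPdf.intervalIntegrable
      stdNormalPdf_pos (by linarith)
  have htail : 0 ≤ stdNormalCdf (z - 1) :=
    setIntegral_nonneg measurableSet_Iic fun u _ => (stdNormalPdf_pos u).le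
  linarith

lemma stdNormalCdf_zero : stdNormalCdf 0 = 1 / 2 := by
  have hreflect : ∫ u in Ioi (0 : ℝ), stdNormalPdf u = stdNormalCdf 0 := by
    rw [stdNormalCdf, ← neg_zero, ← integral_comp_neg_Ioi]
    simp only [stdNormalPdf_neg, neg_zero]
  have htotal : stdNormalCdf 0 + ∫ u in Ioi (0 : ℝ), stdNormalPdf u = 1 := by
    rw [stdNormalCdf, intervalIntegral.integral_Iic_add_Ioi integrable_stdNormalPdf.integrableOn
      integrable_stdNormalPdf.integrableOn, integral_stdNormalPdf]
  linarith

lemma isMaxOn_Iio_of_hasDerivAt {f f' : ℝ → ℝ} {a b : ℝ} (hab : a < b)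
    (hf : ∀ x < b, HasDerivAt f (f' x) x) (hinc : ∀ x < a, 0 ≤ f' x)
    (hdec : ∀ x ∈ Ioo a b, f' x ≤ 0) : IsMaxOn f (Iio b) a := by
  have hcont : ContinuousOn f (Iio b) := fun x hx => (hf x hx).continuousAt.continuousWithinAt
  intro x (hxb : x < b)
  rcases le_or_gt x a with hxa | hax
  · refine monotoneOn_of_hasDerivWithinAt_nonneg (f' := f') (convex_Iic a)
      (hcont.mono fun y hy => lt_of_le_of_lt hy hab) (fun y hy => ?_) (fun y hy => ?_)
      hxa self_mem_Iic hxa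
    all_goals rw [interior_Iic] at hy
    · exact (hf y (hy.out.trans hab)).hasDerivWithinAt
    · exact hinc y hy
  · refine antitoneOn_of_hasDerivWithinAt_nonpos (f' := f') (convex_Icc a x)
      (hcont.mono fun y hy => lt_of_le_of_lt hy.2 hxb) (fun y hy => ?_) (fun y hy => ?_)
      (left_mem_Icc.2 hax.le) (right_mem_Icc.2 hax.le) hax.le
    all_goals rw [interior_Icc] at hy
    · exact (hf y (hy.2.trans hxb)).hasDerivWithinAt
    · exact hdec y ⟨hy.1, hy.2.trans hxb⟩

/-- The left-hand side of the first-order condition (19), written in `z = z_δ`. -/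
noncomputable def stationarityLhs (z : ℝ) : ℝ :=
  stdNormalCdf z * (1 - z ^ 2) - z * stdNormalPdf z

/-- The relative-value bound `R̄_δ`, written in `z = z_δ`. -/
noncomputable def relValueBound (z : ℝ) : ℝ := -stdNormalPdf z / z - stdNormalCdf z

noncomputable def expectedReward (lam z : ℝ) : ℝ :=
  (1 - 2 * stdNormalCdf z * (1 + lam)) * relValueBound z

lemma hasDerivAt_stationarityLhs (z : ℝ) :
    HasDerivAt stationarityLhs (-2 * z * stdNormalCdf z) z := by
  have h := ((hasDerivAt_stdNormalCdf z).mul ((hasDerivAt_const z 1).sub (hasDerivAt_pow 2 z))).sub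
    ((hasDerivAt_id z).mul (hasDerivAt_stdNormalPdf z))
  refine h.congr_deriv ?_
  simp only [Pi.sub_apply, id, Nat.cast_ofNat]
  ring

lemma continuous_stationarityLhs : Continuous stationarityLhs :=
  continuous_iff_continuousAt.2 fun z => (hasDerivAt_stationarityLhs z).continuousAt

lemma strictMonoOn_stationarityLhs : StrictMonoOn stationarityLhs (Iic 0) := by
  refine strictMonoOn_of_deriv_pos (convex_Iic 0) continuous_stationarityLhs.continuousOn
    fun z hz => ?_
  rw [interior_Iic] at hz
  rw [(hasDerivAt_stationarityLhs z).deriv]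
  exact mul_pos (by linarith [mem_Iio.1 hz]) (stdNormalCdf_pos z)

lemma stationarityLhs_neg_one : stationarityLhs (-1) = stdNormalPdf 1 := by
  simp [stationarityLhs, stdNormalPdf_neg]

lemma stationarityLhs_zero : stationarityLhs 0 = 1 / 2 := by
  simp [stationarityLhs, stdNormalCdf_zero]

lemma hasDerivAt_relValueBound {z : ℝ} (hz : z ≠ 0) :
    HasDerivAt relValueBound (stdNormalPdf z / z ^ 2) z := by
  refine (((hasDerivAt_stdNormalPdf z).neg.div (hasDerivAt_id z) hz).sub
    (hasDerivAt_stdNormalCdf z)).congr_deriv ?_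
  simp only [id, Pi.neg_apply]
  field_simp
  ring

lemma hasDerivAt_expectedReward (lam : ℝ) {z : ℝ} (hz : z ≠ 0) :
    HasDerivAt (expectedReward lam)
      (stdNormalPdf z / z ^ 2 * (1 - 2 * (1 + lam) * stationarityLhs z)) z := by
  refine ((((hasDerivAt_stdNormalCdf z).const_mul 2).mul_const (1 + lam)).const_sub 1
    |>.mul (hasDerivAt_relValueBound hz)).congr_deriv ?_
  rw [relValueBound, stationarityLhs]
  field_simp
  ring

lemma isMaxOn_expectedReward {lam zs : ℝ} (hlam : 0 < 1 + lam) (hzs : zs < 0)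
    (hroot : 2 * (1 + lam) * stationarityLhs zs = 1) :
    IsMaxOn (expectedReward lam) (Iio 0) zs := by
  have hfactor : ∀ x, 1 - 2 * (1 + lam) * stationarityLhs x =
      2 * (1 + lam) * (stationarityLhs zs - stationarityLhs x) := fun x => by
    linear_combination -hroot
  have hweight : ∀ x, 0 ≤ stdNormalPdf x / x ^ 2 := fun x => by
    have := stdNormalPdf_pos x
    positivity
  refine isMaxOn_Iio_of_hasDerivAt hzs (fun x hx => hasDerivAt_expectedReward lam hx.ne)
    (fun x hx => ?_) (fun x hx => ?_)
  · have hF := strictMonoOn_stationarityLhs (hx.trans hzs).le hzs.le hx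
    rw [hfactor]
    exact mul_nonneg (hweight x) (mul_nonneg (by linarith) (sub_nonneg.2 hF.le))
  · have hF := strictMonoOn_stationarityLhs hzs.le hx.2.le hx.1
    rw [hfactor]
    exact mul_nonpos_of_nonneg_of_nonpos (hweight x)
      (mul_nonpos_of_nonneg_of_nonpos (by linarith) (sub_nonpos.2 hF.le))

/-- For λ ∈ (0,1], the equation Φ(z)(1 − z²) − z·φ(z) = 1/(2(1+λ)) has a unique
solution z* < 0, and the near-expiry expected relative reward
G(z) = (1 − 2Φ(z)(1+λ))·(−φ(z)/z − Φ(z)) attains its maximum over (−∞,0) at z*. -/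
theorem expected_reward_max_at_unique_root (lam : ℝ) (hlam : lam ∈ Set.Ioc (0 : ℝ) 1) :
    ∃ zs : ℝ, zs < 0 ∧
      stdNormalCdf zs * (1 - zs ^ 2) - zs * stdNormalPdf zs = 1 / (2 * (1 + lam)) ∧
      (∀ z : ℝ, z < 0 →
        stdNormalCdf z * (1 - z ^ 2) - z * stdNormalPdf z = 1 / (2 * (1 + lam)) →
        z = zs) ∧
      ∀ z : ℝ, z < 0 →
        (1 - 2 * stdNormalCdf z * (1 + lam)) * (-stdNormalPdf z / z - stdNormalCdf z) ≤
          (1 - 2 * stdNormalCdf zs * (1 + lam)) *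
            (-stdNormalPdf zs / zs - stdNormalCdf zs) := by
  obtain ⟨hlam0, hlam1⟩ := hlam
  have hlow : stationarityLhs (-1) < 1 / (2 * (1 + lam)) := by
    rw [stationarityLhs_neg_one]
    refine stdNormalPdf_one_lt.trans_le ?_
    rw [le_div_iff₀ (by linarith)]
    linarith
  have hhigh : 1 / (2 * (1 + lam)) < stationarityLhs 0 := by
    rw [stationarityLhs_zero]
    exact one_div_lt_one_div_of_lt (by norm_num) (by linarith)
  obtain ⟨zs, ⟨-, hzs⟩, hroot⟩ := intermediate_value_Ioo (by norm_num)
    continuous_stationarityLhs.continuousOn ⟨hlow, hhigh⟩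
  refine ⟨zs, hzs, hroot, fun z hz hzroot => ?_, fun z hz => ?_⟩
  · exact strictMonoOn_stationarityLhs.injOn hz.le hzs.le (hzroot.trans hroot.symm)
  · have hroot' : 2 * (1 + lam) * stationarityLhs zs = 1 := by
      rw [hroot]
      field_simp
    exact isMaxOn_iff.1 (isMaxOn_expectedReward (by linarith) hzs hroot') z hz
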